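/- Let k be a field, R = k[[u]], M = R², and t ∈ End_R(M) the endomorphism with matrix (0 1; u³ 0) in the standard basis. Let T be the R-subalgebra of End_R(M) generated by t. Then T ≅ R[X]/(X²−u³) and M is a free T-module of rank one, generated by the second standard basis vector e₂. -/

import Mathlib

open PowerSeries

set_option synthInstance.maxHeartbeats 1000000
set_option maxHeartbeats 1000000

/-- The endomorphism of `M = R²`, `R = k⟦u⟧`, with matrix `(0 1; u³ 0)` in the standard
basis: `e₁ ↦ u³·e₂`, `e₂ ↦ e₁`, i.e. `(x, y) ↦ (y, u³·x)`. -/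
noncomputable def tGood (k : Type*) [Field k] :
    Module.End (PowerSeries k) (PowerSeries k × PowerSeries k) :=
  LinearMap.prod
    (LinearMap.snd (PowerSeries k) (PowerSeries k) (PowerSeries k))
    (((PowerSeries.X : PowerSeries k) ^ 3) • LinearMap.fst (PowerSeries k) (PowerSeries k) (PowerSeries k))

/-- The `R`-subalgebra of `End_R(M)` generated by `t`. -/
noncomputable def TGood (k : Type*) [Field k] :
    Subalgebra (PowerSeries k) (Module.End (PowerSeries k) (PowerSeries k × PowerSeries k)) :=
  Algebra.adjoin (PowerSeries k) {tGood k}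

/-!
The algebra `A = R[X]/(X² − c)` acts on `R²` through `X ↦ t = (0 1; c 0)`, because `t² = c`.
Since `A` is free on `1, X` and `(a + bX)·e₂ = a·e₂ + b·t e₂ = (b, a)`, the orbit map
`A → R²` of `e₂` is bijective. Hence the action is faithful, so `A` is isomorphic to its image
`R[t]`, and the orbit map of `e₂` on `R[t]` is bijective as well.
-/

open Polynomial

section OrbitMap

variable {R A M : Type*} [CommSemiring R] [Semiring A] [Algebra R A]
  [AddCommMonoid M] [Module R M]

theorem AlgHom.injective_of_bijective_apply {φ : A →ₐ[R] Module.End R M} {m : M}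
    (h : Function.Bijective fun a => φ a m) : Function.Injective φ :=
  fun _ _ hab => h.1 (congrArg (· m) hab)

theorem AlgHom.bijective_range_smul_of_bijective_apply {φ : A →ₐ[R] Module.End R M} {m : M}
    (h : Function.Bijective fun a => φ a m) : Function.Bijective fun s : φ.range => s • m := by
  let e := AlgEquiv.ofInjective φ (AlgHom.injective_of_bijective_apply h)
  have hcomp : (fun s : φ.range => s • m) = (fun a => φ a m) ∘ e.symm := by
    funext s
    conv_lhs => rw [← e.apply_symm_apply s]
    rfl
  rw [hcomp]
  exact h.comp e.symm.bijective

end OrbitMap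

theorem AdjoinRoot.exists_eq_of_add_of_mul_root {R : Type*} [CommRing R] {f : R[X]}
    (hf : f.Monic) (hdeg : f.natDegree ≤ 2) (z : AdjoinRoot f) :
    ∃ a b : R, z = of f a + of f b * root f := by
  nontriviality AdjoinRoot f
  obtain ⟨p, hp, rfl⟩ := (powerBasis' hf).exists_eq_aeval z
  rw [powerBasis'_dim] at hp
  obtain ⟨b, a, rfl⟩ := exists_eq_X_add_C_of_natDegree_le_one (p := p) (by omega)
  refine ⟨a, b, ?_⟩
  simp only [powerBasis'_gen, map_add, map_mul, aeval_C, aeval_X, algebraMap_eq]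
  ring

section LiftOfAevalEqZero

variable {R B : Type*} [CommRing R] [Semiring B] [Algebra R B] {f : R[X]}

/-- Unlike `AdjoinRoot.liftAlgHom`, the target algebra need not be commutative. -/
noncomputable def AdjoinRoot.liftOfAevalEqZero (b : B) (hb : Polynomial.aeval b f = 0) :
    AdjoinRoot f →ₐ[R] B :=
  Ideal.Quotient.liftₐ _ (Polynomial.aeval b) fun p hp => by
    obtain ⟨q, rfl⟩ := Ideal.mem_span_singleton'.1 hp
    rw [map_mul, hb, mul_zero]

variable (b : B) (hb : Polynomial.aeval b f = 0)

@[simp]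
theorem AdjoinRoot.liftOfAevalEqZero_mk (p : R[X]) :
    liftOfAevalEqZero b hb (mk f p) = Polynomial.aeval b p :=
  rfl

@[simp]
theorem AdjoinRoot.liftOfAevalEqZero_of (r : R) :
    liftOfAevalEqZero b hb (of f r) = algebraMap R B r :=
  (liftOfAevalEqZero b hb).commutes r

@[simp]
theorem AdjoinRoot.liftOfAevalEqZero_root : liftOfAevalEqZero b hb (root f) = b := by
  rw [← mk_X, liftOfAevalEqZero_mk, Polynomial.aeval_X]

theorem AdjoinRoot.range_liftOfAevalEqZero :
    (liftOfAevalEqZero b hb).range = Algebra.adjoin R {b} := by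
  rw [← Algebra.map_top, ← adjoinRoot_eq_top, AlgHom.map_adjoin_singleton,
    liftOfAevalEqZero_root]

end LiftOfAevalEqZero

section SqrtAction

variable {R : Type*} [CommRing R]

def shiftMul (c : R) : Module.End R (R × R) :=
  (LinearMap.snd R R R).prod (c • LinearMap.fst R R R)

@[simp]
theorem shiftMul_apply (c : R) (m : R × R) : shiftMul c m = (m.2, c * m.1) :=
  rfl

theorem shiftMul_mul_self (c : R) : shiftMul c * shiftMul c = algebraMap R _ c := by
  ext <;> simp [Module.End.mul_apply, Module.algebraMap_end_apply]

theorem aeval_shiftMul_X_sq_sub_C (c : R) :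
    Polynomial.aeval (shiftMul c) (Polynomial.X ^ 2 - Polynomial.C c) = 0 := by
  rw [map_sub, map_pow, aeval_X, aeval_C, sq, shiftMul_mul_self, sub_self]

noncomputable def sqrtAction (c : R) :
    AdjoinRoot (Polynomial.X ^ 2 - Polynomial.C c) →ₐ[R] Module.End R (R × R) :=
  AdjoinRoot.liftOfAevalEqZero (shiftMul c) (aeval_shiftMul_X_sq_sub_C c)

theorem range_sqrtAction (c : R) :
    (sqrtAction c).range = Algebra.adjoin R {shiftMul c} :=
  AdjoinRoot.range_liftOfAevalEqZero _ _

theorem sqrtAction_of_add_of_mul_root_apply (c a b : R) :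
    sqrtAction c (AdjoinRoot.of _ a + AdjoinRoot.of _ b * AdjoinRoot.root _) (0, 1) = (b, a) := by
  simp [sqrtAction, Module.End.mul_apply, Module.algebraMap_end_apply]

theorem bijective_sqrtAction_apply (c : R) :
    Function.Bijective fun z => sqrtAction c z (0, 1) := by
  refine Function.bijective_iff_has_inverse.2
    ⟨fun m => AdjoinRoot.of _ m.2 + AdjoinRoot.of _ m.1 * AdjoinRoot.root _, fun z => ?_,
      fun m => sqrtAction_of_add_of_mul_root_apply c m.2 m.1⟩
  obtain ⟨a, b, rfl⟩ := AdjoinRoot.exists_eq_of_add_of_mul_root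
    (monic_X_pow_sub_C c two_ne_zero) (natDegree_sub_C.trans_le (natDegree_X_pow_le 2)) z
  simp only [sqrtAction_of_add_of_mul_root_apply]

end SqrtAction

theorem tGood_eq_shiftMul (k : Type*) [Field k] : tGood k = shiftMul (PowerSeries.X ^ 3) :=
  rfl

/-- Let `k` be a field, `R = k⟦u⟧`, `M = R²`, and `t ∈ End_R(M)` the endomorphism with matrix
`(0 1; u³ 0)` in the standard basis; let `T` be the `R`-subalgebra of `End_R(M)` generated by
`t`. Then `T ≅ R[X]/(X² − u³)` and `M` is a free `T`-module of rank one, generated by the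
second standard basis vector `e₂ = (0,1)`: the map `T → M`, `s ↦ s·e₂`, is bijective (it is an
isomorphism of `T`-modules). -/
theorem stmt_3 (k : Type*) [Field k] :
    Nonempty
      ((AdjoinRoot ((Polynomial.X : Polynomial (PowerSeries k)) ^ 2
          - Polynomial.C ((PowerSeries.X : PowerSeries k) ^ 3))) ≃ₐ[PowerSeries k] TGood k) ∧
    Function.Bijective
      (fun s : TGood k => s • (((0 : PowerSeries k), (1 : PowerSeries k)))) := by
  have hT : (sqrtAction (PowerSeries.X ^ 3 : PowerSeries k)).range = TGood k := by
    rw [range_sqrtAction, TGood, tGood_eq_shiftMul]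
  have horbit := bijective_sqrtAction_apply (PowerSeries.X ^ 3 : PowerSeries k)
  refine ⟨⟨(AlgEquiv.ofInjective _ (AlgHom.injective_of_bijective_apply horbit)).trans
    (Subalgebra.equivOfEq _ _ hT)⟩, ?_⟩
  rw [← hT]
  exact AlgHom.bijective_range_smul_of_bijective_apply horbit
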